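/- arXiv:1907.10832 — 2 statements merged into one kernel-verified Lean document; each statement's English description precedes it below -/
import Mathlib

section
/- Let T be a partial isometry (a contraction with T T* T = T) on a complex Hilbert space H, and let T₁, T₂ be contractions on H. Suppose there exist bounded operators F₁, F₂ on the defect space 𝒟_T = ker T such that T₁ − T₂*T = D_T F₁ D_T and T₂ − T₁*T = D_T F₂ D_T. Let D₁, D₂ denote the restrictions of T₁, T₂ to the invariant subspace ker T, viewed as bounded operators on the Hilbert space ker T. Then F₁*F₁ − F₁F₁* = F₂*F₂ − F₂F₂* if and only if D₁*D₁ − D₁D₁* = D₂*D₂ − D₂D₂*. -/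
/- Common definitions: the tetrablock, tetrablock contractions, defect operators and
defect spaces, fundamental operators, tetrablock isometries and tetrablock-isometric lifts. -/

noncomputable section

open ContinuousLinearMap

universe u

/-- The tetrablock domain `𝔼 ⊆ ℂ³`: points `(x₁,x₂,x₃)` of the form
`(a₁₁, a₂₂, det A)` for some `2×2` complex matrix `A` of operator norm `< 1`. -/
def tetrablock : Set (Fin 3 → ℂ) :=
  {x | ∃ A : Matrix (Fin 2) (Fin 2) ℂ,
    ‖Matrix.toEuclideanCLM (𝕜 := ℂ) A‖ < 1 ∧ x 0 = A 0 0 ∧ x 1 = A 1 1 ∧ x 2 = A.det}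

variable {H : Type u} [NormedAddCommGroup H] [InnerProductSpace ℂ H] [CompleteSpace H]

/-- Evaluation `p(T₁,T₂,T)` of a three-variable polynomial at a (commuting) operator
triple: substitute `T₁,T₂,T` monomial-wise (order is immaterial for commuting triples). -/
def polyEval (T₁ T₂ T : H →L[ℂ] H) (p : MvPolynomial (Fin 3) ℂ) : H →L[ℂ] H :=
  p.support.sum fun m => p.coeff m • (T₁ ^ m 0 * T₂ ^ m 1 * T ^ m 2)

/-- A tetrablock contraction: a commuting triple for which the closed tetrablock is a
spectral set. -/
def IsTetrablockContraction (T₁ T₂ T : H →L[ℂ] H) : Prop :=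
  Commute T₁ T₂ ∧ Commute T₁ T ∧ Commute T₂ T ∧
  ∀ p : MvPolynomial (Fin 3) ℂ,
    ‖polyEval T₁ T₂ T p‖ ≤
      sSup {y : ℝ | ∃ x ∈ closure tetrablock, y = ‖MvPolynomial.eval x p‖}

/-- The defect operator `D_T = (I - T*T)^{1/2}` of a contraction `T`. -/
def defect (T : H →L[ℂ] H) : H →L[ℂ] H := CFC.sqrt (1 - adjoint T * T)

/-- The defect space `𝒟_T`, the closure of the range of `D_T`. -/
def defectSpace (T : H →L[ℂ] H) : Submodule ℂ H :=
  (LinearMap.range (defect T : H →ₗ[ℂ] H)).topologicalClosure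

lemma defect_mem (T : H →L[ℂ] H) (h : H) : defect T h ∈ defectSpace T :=
  Submodule.le_topologicalClosure _ ⟨h, rfl⟩

/-- The defect operator `D_T`, viewed as a map from `H` into the defect space `𝒟_T`. -/
def defectTo (T : H →L[ℂ] H) : H →L[ℂ] defectSpace T :=
  (defect T).codRestrict _ (defect_mem T)

instance (T : H →L[ℂ] H) : CompleteSpace (defectSpace T) :=
  (Submodule.isClosed_topologicalClosure _).completeSpace_coe

/-- `F₁, F₂` are fundamental operators for `(T₁,T₂,T)`:
`T₁ - T₂* T = D_T F₁ D_T` and `T₂ - T₁* T = D_T F₂ D_T`. -/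
def AreFundamentalOps (T₁ T₂ T : H →L[ℂ] H)
    (F₁ F₂ : defectSpace T →L[ℂ] defectSpace T) : Prop :=
  T₁ - adjoint T₂ * T = (defectSpace T).subtypeL ∘L F₁ ∘L defectTo T ∧
  T₂ - adjoint T₁ * T = (defectSpace T).subtypeL ∘L F₂ ∘L defectTo T

/-- A tetrablock isometry: a commuting triple `(V₁,V₂,V)` with `V` an isometry,
`‖V₂‖ ≤ 1` and `V₁ = V₂* V`. -/
def IsTetrablockIsometry {K : Type u} [NormedAddCommGroup K] [InnerProductSpace ℂ K]
    [CompleteSpace K] (V₁ V₂ V : K →L[ℂ] K) : Prop :=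
  Commute V₁ V₂ ∧ Commute V₁ V ∧ Commute V₂ V ∧
    adjoint V * V = 1 ∧ ‖V₂‖ ≤ 1 ∧ V₁ = adjoint V₂ * V

/-- `(T₁,T₂,T)` has a tetrablock-isometric lift: a tetrablock isometry `(V₁,V₂,V)` on a
space `K ⊇ H` whose adjoints extend the adjoints of `T₁,T₂,T`. -/
def HasTetrablockIsometricLift (T₁ T₂ T : H →L[ℂ] H) : Prop :=
  ∃ (K : Type u) (_ : NormedAddCommGroup K) (_ : InnerProductSpace ℂ K) (_ : CompleteSpace K)
    (ι : H →ₗᵢ[ℂ] K) (V₁ V₂ V : K →L[ℂ] K),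
      IsTetrablockIsometry V₁ V₂ V ∧
      (∀ h : H, adjoint V₁ (ι h) = ι (adjoint T₁ h)) ∧
      (∀ h : H, adjoint V₂ (ι h) = ι (adjoint T₂ h)) ∧
      (∀ h : H, adjoint V (ι h) = ι (adjoint T h))

/-! Since `T*T` is a projection, `D_T = I - T*T` is the projection onto `ker T`, so `𝒟_T = ker T`
and on `ker T` the identity `Tᵢ - Tⱼ*T = D_T Fᵢ D_T` reads `Tᵢ x = Fᵢ x`. Thus `Dᵢ` is `Fᵢ`
transported along `𝒟_T = ker T`; this transport is a *-algebra isomorphism, so it carries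
self-commutators to self-commutators and reflects their equality. -/

theorem isStarProjection_adjoint_mul_self {𝕜 E : Type*} [RCLike 𝕜] [NormedAddCommGroup E]
    [InnerProductSpace 𝕜 E] [CompleteSpace E] {T : E →L[𝕜] E}
    (hT : T * adjoint T * T = T) : IsStarProjection (adjoint T * T) where
  isIdempotentElem := by rw [IsIdempotentElem, mul_assoc, ← mul_assoc T, hT]
  isSelfAdjoint := IsSelfAdjoint.star_mul_self T

theorem StarAlgEquiv.map_selfCommutator {R A B : Type*} [CommSemiring R] [Ring A] [Ring B]
    [Algebra R A] [Algebra R B] [Star A] [Star B] (φ : A ≃⋆ₐ[R] B) (a : A) :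
    φ (star a * a - a * star a) = star (φ a) * φ a - φ a * star (φ a) := by
  simp only [map_sub, map_mul, map_star]

section PartialIsometry

variable {T : H →L[ℂ] H}

theorem defect_eq_one_sub (hT : IsStarProjection (adjoint T * T)) :
    defect T = 1 - adjoint T * T :=
  CFC.sqrt_unique hT.one_sub.isIdempotentElem.eq hT.one_sub_nonneg

theorem defectSpace_eq_ker (hT : IsStarProjection (adjoint T * T)) :
    defectSpace T = LinearMap.ker (T : H →ₗ[ℂ] H) := by
  have hrange : LinearMap.range (defect T : H →ₗ[ℂ] H) = LinearMap.ker (T : H →ₗ[ℂ] H) := by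
    rw [defect_eq_one_sub hT, ← ker_adjoint_comp_self T]
    exact (LinearMap.IsIdempotentElem.ker_eq_range_one_sub hT.isIdempotentElem.toLinearMap).symm
  rw [defectSpace, hrange]
  exact (isClosed_ker T).submodule_topologicalClosure_eq

theorem defect_apply_of_mem_ker (hT : IsStarProjection (adjoint T * T)) {x : H} (hx : T x = 0) :
    defect T x = x := by
  simp [defect_eq_one_sub hT, hx]

def defectSpaceEquivKer (hT : IsStarProjection (adjoint T * T)) :
    defectSpace T ≃ₗᵢ[ℂ] LinearMap.ker (T : H →ₗ[ℂ] H) :=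
  LinearIsometryEquiv.ofEq _ _ (defectSpace_eq_ker hT)

theorem defectTo_coe_ker (hT : IsStarProjection (adjoint T * T))
    (x : LinearMap.ker (T : H →ₗ[ℂ] H)) :
    defectTo T x = (defectSpaceEquivKer hT).symm x :=
  Subtype.ext (defect_apply_of_mem_ker hT x.2)

theorem restrict_ker_eq_conjStarAlgEquiv (hT : IsStarProjection (adjoint T * T))
    {A B : H →L[ℂ] H} {F : defectSpace T →L[ℂ] defectSpace T}
    (hF : A - adjoint B * T = (defectSpace T).subtypeL ∘L F ∘L defectTo T)
    {D : LinearMap.ker (T : H →ₗ[ℂ] H) →L[ℂ] LinearMap.ker (T : H →ₗ[ℂ] H)}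
    (hD : ∀ x : LinearMap.ker (T : H →ₗ[ℂ] H), (D x : H) = A x) :
    D = (defectSpaceEquivKer hT).conjStarAlgEquiv F := by
  ext x
  have hAx : A x = F (defectTo T x) := by
    simpa [x.2] using congr($hF x)
  rw [hD, hAx, defectTo_coe_ker hT]
  rfl

end PartialIsometry

theorem selfCommutator_iff_restriction_selfCommutator_general
    (T T₁ T₂ : H →L[ℂ] H) (hpi : T * adjoint T * T = T)
    (F₁ F₂ : defectSpace T →L[ℂ] defectSpace T)
    (hF₁ : T₁ - adjoint T₂ * T = (defectSpace T).subtypeL ∘L F₁ ∘L defectTo T)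
    (hF₂ : T₂ - adjoint T₁ * T = (defectSpace T).subtypeL ∘L F₂ ∘L defectTo T)
    (D₁ D₂ : LinearMap.ker (T : H →ₗ[ℂ] H) →L[ℂ] LinearMap.ker (T : H →ₗ[ℂ] H))
    (hD₁ : ∀ x : LinearMap.ker (T : H →ₗ[ℂ] H), (D₁ x : H) = T₁ (x : H))
    (hD₂ : ∀ x : LinearMap.ker (T : H →ₗ[ℂ] H), (D₂ x : H) = T₂ (x : H)) :
    adjoint F₁ * F₁ - F₁ * adjoint F₁ = adjoint F₂ * F₂ - F₂ * adjoint F₂ ↔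
      adjoint D₁ * D₁ - D₁ * adjoint D₁ = adjoint D₂ * D₂ - D₂ * adjoint D₂ := by
  have hT := isStarProjection_adjoint_mul_self hpi
  rw [restrict_ker_eq_conjStarAlgEquiv hT hF₁ hD₁, restrict_ker_eq_conjStarAlgEquiv hT hF₂ hD₂]
  simp only [← star_eq_adjoint, ← StarAlgEquiv.map_selfCommutator, EmbeddingLike.apply_eq_iff_eq]

/-- under the hypotheses of Statement 13, with `D₁, D₂` the restrictions of
`T₁, T₂` to the invariant subspace `ker T`, we have
`F₁*F₁ - F₁F₁* = F₂*F₂ - F₂F₂*` if and only if `D₁*D₁ - D₁D₁* = D₂*D₂ - D₂D₂*`. -/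
theorem selfCommutator_iff_restriction_selfCommutator
    (T T₁ T₂ : H →L[ℂ] H) (hT : ‖T‖ ≤ 1) (hpi : T * adjoint T * T = T)
    (h1 : ‖T₁‖ ≤ 1) (h2 : ‖T₂‖ ≤ 1)
    (F₁ F₂ : defectSpace T →L[ℂ] defectSpace T)
    (hF₁ : T₁ - adjoint T₂ * T = (defectSpace T).subtypeL ∘L F₁ ∘L defectTo T)
    (hF₂ : T₂ - adjoint T₁ * T = (defectSpace T).subtypeL ∘L F₂ ∘L defectTo T)
    (D₁ D₂ : LinearMap.ker (T : H →ₗ[ℂ] H) →L[ℂ] LinearMap.ker (T : H →ₗ[ℂ] H))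
    (hD₁ : ∀ x : LinearMap.ker (T : H →ₗ[ℂ] H), (D₁ x : H) = T₁ (x : H))
    (hD₂ : ∀ x : LinearMap.ker (T : H →ₗ[ℂ] H), (D₂ x : H) = T₂ (x : H)) :
    adjoint F₁ * F₁ - F₁ * adjoint F₁ = adjoint F₂ * F₂ - F₂ * adjoint F₂ ↔
      adjoint D₁ * D₁ - D₁ * adjoint D₁ = adjoint D₂ * D₂ - D₂ * adjoint D₂ :=
  selfCommutator_iff_restriction_selfCommutator_general T T₁ T₂ hpi F₁ F₂ hF₁ hF₂ D₁ D₂ hD₁ hD₂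
end
end

section
/- Let (T₁,T₂,T) be a tetrablock contraction on a complex Hilbert space H with fundamental operators F₁, F₂, and suppose T is a partial isometry (T T* T = T). Then F₁F₂ = F₂F₁. -/
/- Common definitions: the tetrablock, tetrablock contractions, defect operators and
defect spaces, fundamental operators, tetrablock isometries and tetrablock-isometric lifts. -/

noncomputable section

open ContinuousLinearMap

universe u

variable {H : Type u} [NormedAddCommGroup H] [InnerProductSpace ℂ H] [CompleteSpace H]

/- For a partial isometry `T`, `I - T*T` is an orthogonal projection, hence its own square
root: `D_T = I - T*T`, so `D_T` is the identity on `𝒟_T` and `T` vanishes there. The defining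
identities `T₁ = T₂*T + D_T F₁ D_T`, `T₂ = T₁*T + D_T F₂ D_T` then say that `𝒟_T` is invariant
under `T₁` and `T₂`, with restrictions `F₁` and `F₂`; so `F₁` and `F₂` commute because `T₁` and
`T₂` do. -/

theorem isStarProjection_star_mul_self_of_mul_star_mul_self {R : Type*} [Semigroup R]
    [StarMul R] {a : R} (ha : a * star a * a = a) : IsStarProjection (star a * a) where
  isIdempotentElem := by rw [IsIdempotentElem, mul_assoc, ← mul_assoc a, ha]
  isSelfAdjoint := .star_mul_self a

section PartialIsometry

variable {T : H →L[ℂ] H} (hT : T * adjoint T * T = T)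
include hT

theorem isStarProjection_one_sub_adjoint_mul_self : IsStarProjection (1 - adjoint T * T) :=
  (isStarProjection_star_mul_self_of_mul_star_mul_self (a := T) hT).one_sub

theorem defect_eq_one_sub_adjoint_mul_self : defect T = 1 - adjoint T * T :=
  CFC.sqrt_unique (isStarProjection_one_sub_adjoint_mul_self hT).isIdempotentElem
    (isStarProjection_one_sub_adjoint_mul_self hT).nonneg

theorem isIdempotentElem_defect : IsIdempotentElem (defect T) :=
  defect_eq_one_sub_adjoint_mul_self hT ▸
    (isStarProjection_one_sub_adjoint_mul_self hT).isIdempotentElem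

theorem mul_defect_eq_zero : T * defect T = 0 := by
  rw [defect_eq_one_sub_adjoint_mul_self hT, mul_sub, mul_one, ← mul_assoc, hT, sub_self]

theorem defectSpace_eq_range : defectSpace T = LinearMap.range (defect T : H →ₗ[ℂ] H) :=
  (ContinuousLinearMap.IsIdempotentElem.isClosed_range
    (isIdempotentElem_defect hT)).submodule_topologicalClosure_eq

theorem defect_apply_of_mem_defectSpace {x : H} (hx : x ∈ defectSpace T) : defect T x = x :=
  (LinearMap.IsIdempotentElem.mem_range_iff (isIdempotentElem_defect hT).toLinearMap).mp
    (defectSpace_eq_range hT ▸ hx)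

theorem apply_eq_zero_of_mem_defectSpace {x : H} (hx : x ∈ defectSpace T) : T x = 0 := by
  rw [← defect_apply_of_mem_defectSpace hT hx, ← mul_apply_eq_comp, mul_defect_eq_zero hT,
    zero_apply]

theorem defectTo_coe (d : defectSpace T) : defectTo T d = d :=
  Subtype.ext (defect_apply_of_mem_defectSpace hT d.2)

end PartialIsometry

theorem AreFundamentalOps.symm {T₁ T₂ T : H →L[ℂ] H}
    {F₁ F₂ : defectSpace T →L[ℂ] defectSpace T} (hF : AreFundamentalOps T₁ T₂ T F₁ F₂) :
    AreFundamentalOps T₂ T₁ T F₂ F₁ :=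
  ⟨hF.2, hF.1⟩

theorem AreFundamentalOps.apply_coe_of_partialIsometry {T₁ T₂ T : H →L[ℂ] H}
    {F₁ F₂ : defectSpace T →L[ℂ] defectSpace T} (hF : AreFundamentalOps T₁ T₂ T F₁ F₂)
    (hT : T * adjoint T * T = T) (d : defectSpace T) : T₁ d = F₁ d := by
  have h := congr($(hF.1) (d : H))
  rw [sub_apply, mul_apply_eq_comp, apply_eq_zero_of_mem_defectSpace hT d.2, map_zero,
    sub_zero] at h
  rw [h, comp_apply, comp_apply, defectTo_coe hT]
  rfl

/-- for a tetrablock contraction `(T₁,T₂,T)` with `T` a partial isometry,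
the fundamental operators commute. -/
theorem fundamentalOps_commute_of_partialIsometry
    (T₁ T₂ T : H →L[ℂ] H) (hT : IsTetrablockContraction T₁ T₂ T)
    (hpi : T * adjoint T * T = T)
    (F₁ F₂ : defectSpace T →L[ℂ] defectSpace T)
    (hF : AreFundamentalOps T₁ T₂ T F₁ F₂) :
    F₁ * F₂ = F₂ * F₁ := by
  have h₁ := hF.apply_coe_of_partialIsometry hpi
  have h₂ := hF.symm.apply_coe_of_partialIsometry hpi
  ext d
  calc ((F₁ (F₂ d) : defectSpace T) : H) = T₁ (T₂ d) := by rw [h₂, h₁]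
    _ = T₂ (T₁ d) := by rw [← mul_apply_eq_comp, hT.1.eq, mul_apply_eq_comp]
    _ = F₂ (F₁ d) := by rw [h₁, h₂]
end
end
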